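/- (Proposition 3.1.) Let p ∈ ℝ², ε > 0, k ≥ 0, τ > 0, t ∈ ℝ, and ω ∈ S¹ with ω^⊥ its rotation by π/2. Then ∫_{B(p,ε)} exp(x·(τω + i√(τ²+k²)·ω^⊥) − τt) dx = 2πε² · (∫₀¹ r·J₀(kεr) dr) · exp(p·(τω + i√(τ²+k²)·ω^⊥) − τt), where B(p,ε) is the open disk of radius ε centred at p and J₀(x) = Σ_{m=0}^∞ ((−1)^m/(m!)²)(x/2)^{2m} is the Bessel function of order zero. -/

import Mathlib

open MeasureTheory Filter Topology

noncomputable section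

/-- The Euclidean plane ℝ². -/
abbrev E2 : Type := EuclideanSpace ℝ (Fin 2)

/-- Rotation of a vector of ℝ² by π/2. -/
def perp (ω : E2) : E2 := (EuclideanSpace.equiv (Fin 2) ℝ).symm ![-(ω 1), ω 0]

/-- Euclidean dot product on ℝ². -/
def dotR (x y : E2) : ℝ := inner ℝ x y

/-- Support function `h_D(ω) = sup_{x ∈ D} x·ω`. -/
def suppFn (D : Set E2) (ω : E2) : ℝ := sSup ((fun x => dotR x ω) '' D)

/-- Complex plane wave `v(x) = exp(x·(τω + i√(τ²+k²) ω^⊥) − τt)`. -/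
def pw (k : ℝ) (ω : E2) (τ t : ℝ) (x : E2) : ℂ :=
  Complex.exp (↑(τ * dotR x ω - τ * t) +
    Complex.I * ↑(Real.sqrt (τ ^ 2 + k ^ 2) * dotR x (perp ω)))

/-- Indicator function `I_ω(τ,t) = ∫_D ρ(x) v(x) dx`. -/
def ind (D : Set E2) (ρ : E2 → ℝ) (k : ℝ) (ω : E2) (τ t : ℝ) : ℂ :=
  ∫ x in D, (ρ x : ℂ) * pw k ω τ t x

/-- The Bessel function of order zero, `J₀(x) = Σ_{m=0}^∞ ((−1)^m/(m!)²)(x/2)^{2m}`. -/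
def besselJ0 (x : ℝ) : ℝ :=
  ∑' m : ℕ, (-1) ^ m / ((m.factorial : ℝ)) ^ 2 * (x / 2) ^ (2 * m)

/-! Writing the plane wave as `exp (A x₀ + B x₁)` with `A² + B² = -k²`, a translation pulls out its
value at the centre, and polar coordinates reduce the disk integral to the circle integrals
`∫_{-π}^{π} exp (r (A cos θ + B sin θ)) dθ`. With `α, β = r (A ∓ i B) / 2` the exponent is
`α e^{iθ} + β e^{-iθ}`; integrating the exponential series term by term, only the constant Fourier
modes survive, leaving `2π Σ (αβ)^m / (m!)² = 2π J₀(kr)` because `αβ = -(kr)² / 4`. -/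

open Set Complex
open scoped Nat Real

theorem integral_exp_int_mul_mul_I (m : ℤ) :
    ∫ θ in (-π)..π, exp (m * θ * I) = if m = 0 then (2 * π : ℂ) else 0 := by
  split_ifs with hm
  · simp [hm, two_mul]
  · have hmI : (m : ℂ) * I ≠ 0 := mul_ne_zero (Int.cast_ne_zero.mpr hm) I_ne_zero
    have hperiodic : exp (m * I * π) = exp (m * I * (-π : ℝ)) := by
      rw [show (m : ℂ) * I * π = m * I * (-π : ℝ) + m * (2 * π * I) by push_cast; ring,
        exp_add, exp_int_mul_two_pi_mul_I, mul_one]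
    simp_rw [mul_right_comm _ _ I]
    rw [integral_exp_mul_complex hmI, hperiodic, sub_self, zero_div]

theorem add_exp_mul_I_pow (α β : ℂ) (n : ℕ) (θ : ℝ) :
    (α * exp (θ * I) + β * exp (-(θ * I))) ^ n
      = ∑ j ∈ Finset.range (n + 1),
          α ^ j * β ^ (n - j) * n.choose j * exp (((2 * j - n : ℤ) : ℂ) * θ * I) := by
  rw [add_pow]
  refine Finset.sum_congr rfl fun j hj => ?_
  have hjn : j ≤ n := Nat.lt_succ_iff.mp (Finset.mem_range.mp hj)
  rw [mul_pow, mul_pow, ← exp_nat_mul, ← exp_nat_mul, mul_mul_mul_comm, ← exp_add]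
  push_cast [Nat.cast_sub hjn]
  ring_nf

theorem integral_add_exp_mul_I_pow (α β : ℂ) (n : ℕ) :
    ∫ θ in (-π)..π, (α * exp (θ * I) + β * exp (-(θ * I))) ^ n
      = ∑ j ∈ Finset.range (n + 1),
          if 2 * j = n then n.choose j * (α * β) ^ j * (2 * π) else 0 := by
  simp_rw [add_exp_mul_I_pow]
  rw [intervalIntegral.integral_finsetSum fun j _ =>
    (by fun_prop : Continuous _).intervalIntegrable _ _]
  refine Finset.sum_congr rfl fun j _ => ?_
  rw [intervalIntegral.integral_const_mul, integral_exp_int_mul_mul_I]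
  split_ifs with hfreq hj hj
  · obtain rfl := hj
    rw [mul_pow, show 2 * j - j = j by omega]
    ring
  · omega
  · omega
  · rw [mul_zero]

theorem integral_add_exp_mul_I_pow_two_mul (α β : ℂ) (m : ℕ) :
    ∫ θ in (-π)..π, (α * exp (θ * I) + β * exp (-(θ * I))) ^ (2 * m)
      = (2 * m).choose m * (α * β) ^ m * (2 * π) := by
  rw [integral_add_exp_mul_I_pow]
  simp only [Nat.mul_left_cancel_iff two_pos, Finset.sum_ite_eq', Finset.mem_range]
  exact if_pos (by omega)

theorem integral_add_exp_mul_I_pow_two_mul_add_one (α β : ℂ) (m : ℕ) :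
    ∫ θ in (-π)..π, (α * exp (θ * I) + β * exp (-(θ * I))) ^ (2 * m + 1) = 0 := by
  rw [integral_add_exp_mul_I_pow]
  exact Finset.sum_eq_zero fun j _ => if_neg (by omega)

theorem hasSum_intervalIntegral_exp {g : ℝ → ℂ} (hg : Continuous g) (a b : ℝ) :
    HasSum (fun n : ℕ => ∫ θ in a..b, g θ ^ n / n !) (∫ θ in a..b, exp (g θ)) := by
  obtain ⟨C, hC⟩ :=
    (isCompact_uIcc (a := a) (b := b)).exists_bound_of_continuousOn hg.continuousOn
  refine intervalIntegral.hasSum_integral_of_dominated_convergence (fun n _ => C ^ n / n !)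
    (fun n => by fun_prop) (fun n => ae_of_all _ fun θ hθ => ?_)
    (ae_of_all _ fun _ _ => Real.summable_pow_div_factorial C) intervalIntegrable_const
    (ae_of_all _ fun θ _ => by
      rw [exp_eq_exp_ℂ]; exact NormedSpace.expSeries_div_hasSum_exp (g θ))
  rw [norm_div, norm_pow, Complex.norm_natCast]
  gcongr
  exact hC θ (uIoc_subset_uIcc hθ)

theorem cos_add_sin_eq_exp (u v : ℂ) (θ : ℝ) :
    u * Real.cos θ + v * Real.sin θ
      = (u - I * v) / 2 * exp (θ * I) + (u + I * v) / 2 * exp (-(θ * I)) := by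
  rw [ofReal_cos, ofReal_sin, Complex.cos, Complex.sin]
  ring_nf

theorem hasSum_integral_exp_cos_add_sin (u v : ℂ) :
    HasSum (fun m : ℕ => 2 * π * (((u ^ 2 + v ^ 2) / 4) ^ m / (m ! : ℂ) ^ 2))
      (∫ θ in (-π)..π, exp (u * Real.cos θ + v * Real.sin θ)) := by
  have hαβ : (u - I * v) / 2 * ((u + I * v) / 2) = (u ^ 2 + v ^ 2) / 4 := by
    linear_combination (-v ^ 2 / 4) * I_sq
  simp_rw [cos_add_sin_eq_exp]
  have hseries := hasSum_intervalIntegral_exp (by fun_prop) (-π) π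
    (g := fun θ : ℝ => (u - I * v) / 2 * exp (θ * I) + (u + I * v) / 2 * exp (-(θ * I)))
  rw [← (mul_right_injective₀ (two_ne_zero' ℕ)).hasSum_iff] at hseries
  · convert hseries using 2 with m
    have hcentral : ((2 * m).choose m : ℂ) * (m ! : ℂ) ^ 2 = (2 * m)! := by
      rw [two_mul, sq, ← mul_assoc]
      exact_mod_cast Nat.add_choose_mul_factorial_mul_factorial m m
    have hchoose : ((2 * m).choose m : ℂ) ≠ 0 :=
      Nat.cast_ne_zero.mpr (Nat.choose_pos (by omega)).ne'
    rw [Function.comp_apply, intervalIntegral.integral_div, integral_add_exp_mul_I_pow_two_mul,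
      hαβ, ← hcentral]
    field_simp
  · intro n hn
    obtain ⟨m, rfl⟩ : Odd n :=
      Nat.not_even_iff_odd.mp fun ⟨m, hm⟩ => hn ⟨m, by simp [hm, two_mul]⟩
    rw [intervalIntegral.integral_div, integral_add_exp_mul_I_pow_two_mul_add_one, zero_div]

theorem ofReal_besselJ0 (x : ℝ) :
    (besselJ0 x : ℂ) = ∑' m : ℕ, (-(x : ℂ) ^ 2 / 4) ^ m / (m ! : ℂ) ^ 2 := by
  rw [besselJ0, ofReal_tsum]
  refine tsum_congr fun m => ?_
  rw [show -(x : ℂ) ^ 2 / 4 = -1 * (x / 2) ^ 2 by ring, mul_pow, ← pow_mul]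
  push_cast
  ring

theorem integral_exp_cos_add_sin_eq_besselJ0 {u v : ℂ} {x : ℝ} (h : u ^ 2 + v ^ 2 = -x ^ 2) :
    ∫ θ in (-π)..π, exp (u * Real.cos θ + v * Real.sin θ) = 2 * π * besselJ0 x := by
  rw [← (hasSum_integral_exp_cos_add_sin u v).tsum_eq, tsum_mul_left, h, ofReal_besselJ0]

theorem setIntegral_ball_eq_setIntegral_ball_zero {V E : Type*} [NormedAddCommGroup V]
    [MeasurableSpace V] [BorelSpace V] [NormedAddCommGroup E] [NormedSpace ℝ E]
    (μ : Measure V) [μ.IsAddLeftInvariant] (f : V → E) (c : V) (ε : ℝ) :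
    ∫ x in Metric.ball c ε, f x ∂μ = ∫ y in Metric.ball 0 ε, f (c + y) ∂μ := by
  rw [← (measurePreserving_add_left μ c).setIntegral_preimage_emb
    (MeasurableEquiv.addLeft c).measurableEmbedding, Metric.preimage_add_left_ball, neg_add_cancel]

theorem polarCoord_symm_mem_ball_iff {p : ℝ × ℝ} (hp : 0 < p.1) (ε : ℝ) :
    Complex.polarCoord.symm p ∈ Metric.ball 0 ε ↔ p.1 < ε := by
  rw [mem_ball_zero_iff, Complex.norm_polarCoord_symm, abs_of_pos hp]

theorem setIntegral_ball_eq_integral_polar {E : Type*} [NormedAddCommGroup E] [NormedSpace ℝ E]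
    {f : ℂ → E} (hf : Continuous f) (c : ℂ) {ε : ℝ} (hε : 0 ≤ ε) :
    ∫ z in Metric.ball c ε, f z
      = ∫ r in 0..ε, r • ∫ θ in (-π)..π, f (c + r * exp (θ * I)) := by
  have hpolar : ∀ p : ℝ × ℝ, Complex.polarCoord.symm p = p.1 * exp (p.2 * I) := fun p => by
    rw [Complex.polarCoord_symm_apply, exp_mul_I, ofReal_cos, ofReal_sin]
  set g : ℝ × ℝ → E := fun p => p.1 • f (c + p.1 * exp (p.2 * I))
  have hg : IntegrableOn g (Ioo 0 ε ×ˢ Ioo (-π) π) :=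
    (ContinuousOn.integrableOn_compact (isCompact_Icc.prod isCompact_Icc)
      (by fun_prop : Continuous g).continuousOn).mono_set
      (prod_mono Ioo_subset_Icc_self Ioo_subset_Icc_self)
  have hcut : polarCoord.target ∩ Iio ε ×ˢ univ = Ioo 0 ε ×ˢ Ioo (-π) π := by
    rw [polarCoord_target, prod_inter_prod, Ioi_inter_Iio, inter_univ]
  calc ∫ z in Metric.ball c ε, f z
      = ∫ z, (Metric.ball 0 ε).indicator (fun z => f (c + z)) z := by
        rw [setIntegral_ball_eq_setIntegral_ball_zero, integral_indicator measurableSet_ball]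
    _ = ∫ p in polarCoord.target, (Iio ε ×ˢ univ).indicator g p := by
        rw [← Complex.integral_comp_polarCoord_symm]
        refine setIntegral_congr_fun polarCoord.open_target.measurableSet fun p hp => ?_
        have hp1 : 0 < p.1 := (polarCoord_target ▸ hp).1
        by_cases hpε : p.1 < ε
        · rw [indicator_of_mem ((polarCoord_symm_mem_ball_iff hp1 ε).mpr hpε),
            indicator_of_mem (s := Iio ε ×ˢ univ) ⟨hpε, mem_univ _⟩, hpolar]
        · rw [indicator_of_notMem (mt (polarCoord_symm_mem_ball_iff hp1 ε).mp hpε),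
            indicator_of_notMem (fun h => hpε h.1), smul_zero]
    _ = ∫ r in Ioo 0 ε, ∫ θ in Ioo (-π) π, g (r, θ) := by
        rw [setIntegral_indicator (measurableSet_Iio.prod MeasurableSet.univ), hcut,
          Measure.volume_eq_prod, setIntegral_prod _ hg]
    _ = ∫ r in 0..ε, r • ∫ θ in (-π)..π, f (c + r * exp (θ * I)) := by
        simp only [g, integral_smul, intervalIntegral.integral_of_le hε,
          intervalIntegral.integral_of_le (neg_le_self Real.pi_pos.le),
          integral_Ioc_eq_integral_Ioo]

theorem integral_id_mul_comp_mul_left (f : ℝ → ℝ) (ε : ℝ) :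
    ∫ r in 0..ε, r * f r = ε ^ 2 * ∫ r in 0..1, r * f (ε * r) := by
  have h := intervalIntegral.smul_integral_comp_mul_left (fun r => r * f r) ε (a := 0) (b := 1)
  rw [mul_zero, mul_one] at h
  rw [← h, smul_eq_mul, sq]
  simp only [mul_assoc, intervalIntegral.integral_const_mul]

theorem setIntegral_ball_exp_re_im {A B : ℂ} {k : ℝ} (hAB : A ^ 2 + B ^ 2 = -k ^ 2) (c : ℂ)
    {ε : ℝ} (hε : 0 ≤ ε) :
    ∫ z in Metric.ball c ε, exp (A * z.re + B * z.im)
      = 2 * π * ε ^ 2 * ((∫ r in (0:ℝ)..1, r * besselJ0 (k * ε * r) : ℝ) : ℂ)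
          * exp (A * c.re + B * c.im) := by
  have hcircle : ∀ r : ℝ, ∫ θ in (-π)..π, exp (A * (c + r * exp (θ * I)).re
        + B * (c + r * exp (θ * I)).im)
      = exp (A * c.re + B * c.im) * (2 * π * besselJ0 (k * r)) := fun r => by
    have hsq : (A * r) ^ 2 + (B * r) ^ 2 = -((k * r : ℝ) : ℂ) ^ 2 := by
      push_cast
      linear_combination (r : ℂ) ^ 2 * hAB
    simp only [add_re, add_im, re_ofReal_mul, im_ofReal_mul, exp_ofReal_mul_I_re,
      exp_ofReal_mul_I_im]
    rw [← integral_exp_cos_add_sin_eq_besselJ0 hsq, ← intervalIntegral.integral_const_mul]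
    congr 1 with θ
    rw [← Complex.exp_add]
    push_cast
    ring_nf
  have hradial : ∀ r : ℝ, r • (exp (A * c.re + B * c.im) * (2 * π * besselJ0 (k * r)))
      = exp (A * c.re + B * c.im) * (2 * π) * ((r * besselJ0 (k * r) : ℝ) : ℂ) := fun r => by
    rw [real_smul]
    push_cast
    ring
  rw [setIntegral_ball_eq_integral_polar (by fun_prop) c hε]
  simp_rw [hcircle, hradial, intervalIntegral.integral_const_mul, intervalIntegral.integral_ofReal]
  rw [integral_id_mul_comp_mul_left]
  simp_rw [mul_assoc k]
  push_cast
  ring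

theorem setIntegral_ball_euclidean_eq_complex {E : Type*} [NormedAddCommGroup E]
    [NormedSpace ℝ E] (F : ℝ → ℝ → E) (p : E2) (ε : ℝ) :
    ∫ x in Metric.ball p ε, F (x 0) (x 1) = ∫ z in Metric.ball (p 0 + p 1 * I) ε, F z.re z.im := by
  rw [← Complex.orthonormalBasisOneI.measurePreserving_repr.setIntegral_preimage_emb
    Complex.orthonormalBasisOneI.repr.toHomeomorph.measurableEmbedding,
    LinearIsometryEquiv.preimage_ball, Complex.orthonormalBasisOneI_repr_symm_apply]
  rfl

theorem perp_apply_zero (ω : E2) : perp ω 0 = -ω 1 := rfl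

theorem perp_apply_one (ω : E2) : perp ω 1 = ω 0 := rfl

theorem pw_eq_exp_mul_exp (k τ t : ℝ) (ω x : E2) :
    pw k ω τ t x = exp (-(τ * t : ℝ)) * exp ((τ * ω 0 - I * √(τ ^ 2 + k ^ 2) * ω 1) * x 0
      + (τ * ω 1 + I * √(τ ^ 2 + k ^ 2) * ω 0) * x 1) := by
  have hdot : ∀ y : E2, dotR x y = x 0 * y 0 + x 1 * y 1 := fun y => by
    simp [dotR, PiLp.inner_apply, Fin.sum_univ_two, mul_comm]
  rw [pw, ← Complex.exp_add, hdot, hdot, perp_apply_zero, perp_apply_one]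
  push_cast
  ring_nf

theorem sq_add_sq_eq_neg_sq {ω : E2} (hω : ‖ω‖ = 1) (k τ : ℝ) :
    ((τ * ω 0 - I * √(τ ^ 2 + k ^ 2) * ω 1) ^ 2 + (τ * ω 1 + I * √(τ ^ 2 + k ^ 2) * ω 0) ^ 2 : ℂ)
      = -k ^ 2 := by
  have hω2 : ((ω 0 ^ 2 + ω 1 ^ 2 : ℝ) : ℂ) = 1 := by
    have h := EuclideanSpace.real_norm_sq_eq ω
    rw [hω, one_pow, Fin.sum_univ_two] at h
    exact_mod_cast h.symm
  have hs : ((√(τ ^ 2 + k ^ 2) ^ 2 : ℝ) : ℂ) = τ ^ 2 + k ^ 2 := by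
    rw [Real.sq_sqrt (by positivity)]
    push_cast
    ring
  push_cast at hω2 hs
  linear_combination (τ ^ 2 + I ^ 2 * (√(τ ^ 2 + k ^ 2) : ℂ) ^ 2) * hω2 + I ^ 2 * hs
    + (τ ^ 2 + k ^ 2 : ℂ) * I_sq

theorem ball_integral_eq_general
    (p : E2) (ε k τ t : ℝ) (hε : 0 < ε)
    (ω : E2) (hω : ‖ω‖ = 1) :
    (∫ x in Metric.ball p ε, pw k ω τ t x)
      = 2 * Real.pi * ε ^ 2 * ((∫ r in (0:ℝ)..1, r * besselJ0 (k * ε * r) : ℝ) : ℂ) *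
          pw k ω τ t p := by
  simp_rw [pw_eq_exp_mul_exp k τ t ω]
  rw [integral_const_mul, setIntegral_ball_euclidean_eq_complex
    (fun a b => exp ((τ * ω 0 - I * √(τ ^ 2 + k ^ 2) * ω 1) * a
      + (τ * ω 1 + I * √(τ ^ 2 + k ^ 2) * ω 0) * b)),
    setIntegral_ball_exp_re_im (sq_add_sq_eq_neg_sq hω k τ) _ hε.le]
  simp only [add_re, add_im, mul_re, mul_im, ofReal_re, ofReal_im, I_re, I_im, mul_zero, mul_one,
    sub_self, add_zero, zero_add]
  ring

/-- (Proposition 3.1, mean value property):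
`∫_{B(p,ε)} exp(x·(τω + i√(τ²+k²) ω^⊥) − τt) dx
  = 2πε² (∫₀¹ r J₀(kεr) dr) exp(p·(τω + i√(τ²+k²) ω^⊥) − τt)`. -/
theorem ball_integral_eq
    (p : E2) (ε k τ t : ℝ) (hε : 0 < ε) (hk : 0 ≤ k) (hτ : 0 < τ)
    (ω : E2) (hω : ‖ω‖ = 1) :
    (∫ x in Metric.ball p ε, pw k ω τ t x)
      = 2 * Real.pi * ε ^ 2 * ((∫ r in (0:ℝ)..1, r * besselJ0 (k * ε * r) : ℝ) : ℂ) *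
          pw k ω τ t p :=
  ball_integral_eq_general p ε k τ t hε ω hω
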